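/- Work with real polynomials P in four variables x₁, x₂, x₃, x₄, with formal partial derivatives ∂ᵢ and formal Laplacian ΔP := Σ_{i=1}^{4} ∂ᵢ(∂ᵢ P). Define the three operators L₁P := x₃·∂₁P + x₄·∂₂P − x₁·∂₃P − x₂·∂₄P, L₂P := −x₄·∂₁P + x₃·∂₂P − x₂·∂₃P + x₁·∂₄P, L₃P := x₂·∂₁P − x₁·∂₂P − x₄·∂₃P + x₃·∂₄P. If P is homogeneous of degree p and harmonic (ΔP = 0), then for each k ∈ {1, 2, 3} the polynomial LₖP is again homogeneous of degree p and harmonic. -/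

import Mathlib

/-!
Each `Lₖ` is the linear vector field `P ↦ ∑ A a b • X a * ∂_b P` of a skew-symmetric matrix `A`,
i.e. an infinitesimal rotation of `ℝ⁴`. Every `X a * ∂_b` preserves the degree of a homogeneous
polynomial. Since `Δ (X a * Q) = 2 ∂_a Q + X a * Δ Q`, the commutator of `Δ` with such a field is
`2 ∑ A a b • ∂_a ∂_b`, which pairs the skew-symmetric `A` with the symmetric Hessian and so vanishes.
-/

open MvPolynomial

/-- The formal Laplacian on polynomials in four variables. -/
noncomputable def lap4 (P : MvPolynomial (Fin 4) ℝ) : MvPolynomial (Fin 4) ℝ :=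
  ∑ i : Fin 4, pderiv i (pderiv i P)

/-- `L₁ = x₃∂₁ + x₄∂₂ - x₁∂₃ - x₂∂₄` (0-indexed variables). -/
noncomputable def Lop1 (P : MvPolynomial (Fin 4) ℝ) : MvPolynomial (Fin 4) ℝ :=
  X 2 * pderiv 0 P + X 3 * pderiv 1 P - X 0 * pderiv 2 P - X 1 * pderiv 3 P

/-- `L₂ = -x₄∂₁ + x₃∂₂ - x₂∂₃ + x₁∂₄` (0-indexed variables). -/
noncomputable def Lop2 (P : MvPolynomial (Fin 4) ℝ) : MvPolynomial (Fin 4) ℝ :=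
  -(X 3 * pderiv 0 P) + X 2 * pderiv 1 P - X 1 * pderiv 2 P + X 0 * pderiv 3 P

/-- `L₃ = x₂∂₁ - x₁∂₂ - x₄∂₃ + x₃∂₄` (0-indexed variables). -/
noncomputable def Lop3 (P : MvPolynomial (Fin 4) ℝ) : MvPolynomial (Fin 4) ℝ :=
  X 1 * pderiv 0 P - X 0 * pderiv 1 P - X 3 * pderiv 2 P + X 2 * pderiv 3 P

namespace MvPolynomial

variable {σ R : Type*}

section Derivatives

variable [CommSemiring R]

theorem pderiv_pderiv_comm (i j : σ) (P : MvPolynomial σ R) :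
    pderiv i (pderiv j P) = pderiv j (pderiv i P) := by
  classical
  induction P using MvPolynomial.induction_on with
  | C a => simp
  | add P Q hP hQ => simp only [map_add, hP, hQ]
  | mul_X P k h =>
    simp only [pderiv_mul, map_add, pderiv_X, Pi.single_apply, apply_ite (pderiv _), pderiv_one,
      map_zero, ite_self, mul_zero, add_zero, h]
    ring

protected theorem IsHomogeneous.X_mul_pderiv {φ : MvPolynomial σ R} {n : ℕ}
    (h : φ.IsHomogeneous n) (a b : σ) : (X a * pderiv b φ).IsHomogeneous n := by
  -- `IsHomogeneous.pderiv` gives degree `n - 1`, which truncates at `n = 0`: treat constants apart.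
  obtain _ | n := n
  · rw [← totalDegree_zero_iff_isHomogeneous, totalDegree_eq_zero_iff_eq_C] at h
    rw [h, pderiv_C, mul_zero]
    exact isHomogeneous_zero _ _ _
  · simpa [add_comm] using (isHomogeneous_X R a).mul h.pderiv

end Derivatives

section Laplacian

variable [Fintype σ] [CommSemiring R]

variable (σ R) in
noncomputable def laplacian : MvPolynomial σ R →ₗ[R] MvPolynomial σ R :=
  ∑ i, (pderiv i).toLinearMap ∘ₗ (pderiv i).toLinearMap

theorem laplacian_apply (P : MvPolynomial σ R) :
    laplacian σ R P = ∑ i, pderiv i (pderiv i P) := by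
  simp [laplacian]

theorem laplacian_pderiv (b : σ) (P : MvPolynomial σ R) :
    laplacian σ R (pderiv b P) = pderiv b (laplacian σ R P) := by
  simp only [laplacian_apply, map_sum, pderiv_pderiv_comm _ b]

theorem laplacian_mul (P Q : MvPolynomial σ R) :
    laplacian σ R (P * Q) =
      laplacian σ R P * Q + 2 * ∑ i, pderiv i P * pderiv i Q + P * laplacian σ R Q := by
  simp only [laplacian_apply, pderiv_mul, map_add, Finset.mul_sum, Finset.sum_mul,
    ← Finset.sum_add_distrib]
  refine Finset.sum_congr rfl fun i _ => ?_
  ring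

theorem laplacian_X_mul [DecidableEq σ] (a : σ) (Q : MvPolynomial σ R) :
    laplacian σ R (X a * Q) = 2 * pderiv a Q + X a * laplacian σ R Q := by
  rw [laplacian_mul]
  simp [laplacian_apply, pderiv_X, Pi.single_apply, apply_ite (pderiv _)]

end Laplacian

section LinearVectorField

variable [Fintype σ]

open scoped Matrix

section CommSemiring

variable [CommSemiring R]

noncomputable def linearVectorField (A : Matrix σ σ R) : MvPolynomial σ R →ₗ[R] MvPolynomial σ R :=
  ∑ a, ∑ b, A a b • (LinearMap.mulLeft R (X a) ∘ₗ (pderiv b).toLinearMap)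

theorem linearVectorField_apply (A : Matrix σ σ R) (P : MvPolynomial σ R) :
    linearVectorField A P = ∑ a, ∑ b, A a b • (X a * pderiv b P) := by
  simp [linearVectorField]

protected theorem IsHomogeneous.linearVectorField {P : MvPolynomial σ R} {n : ℕ}
    (h : P.IsHomogeneous n) (A : Matrix σ σ R) : (linearVectorField A P).IsHomogeneous n := by
  rw [linearVectorField_apply]
  exact IsHomogeneous.sum _ _ _ fun a _ => IsHomogeneous.sum _ _ _ fun b _ =>
    (homogeneousSubmodule σ R n).smul_mem _ (h.X_mul_pderiv a b)

variable [DecidableEq σ]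

theorem laplacian_linearVectorField (A : Matrix σ σ R) (P : MvPolynomial σ R) :
    laplacian σ R (linearVectorField A P) =
      2 * ∑ a, ∑ b, A a b • pderiv a (pderiv b P) + linearVectorField A (laplacian σ R P) := by
  simp only [linearVectorField_apply, map_sum, map_smul, laplacian_X_mul, laplacian_pderiv,
    smul_add, Finset.sum_add_distrib, Finset.mul_sum, mul_smul_comm]

end CommSemiring

variable [CommRing R]

theorem sum_smul_pderiv_pderiv_of_transpose_eq_neg {A : Matrix σ σ R} (hA : Aᵀ = -A)
    (P : MvPolynomial σ R) :
    ∑ a, ∑ b, A a b • pderiv a (pderiv b P) = -∑ a, ∑ b, A a b • pderiv a (pderiv b P) := by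
  have hA' : ∀ a b, A a b = -A b a := fun a b => congrFun (congrFun hA b) a
  calc ∑ a, ∑ b, A a b • pderiv a (pderiv b P)
      = ∑ b, ∑ a, A a b • pderiv a (pderiv b P) := Finset.sum_comm
    _ = -∑ b, ∑ a, A b a • pderiv b (pderiv a P) := by
      simp only [← Finset.sum_neg_distrib]
      refine Finset.sum_congr rfl fun b _ => Finset.sum_congr rfl fun a _ => ?_
      rw [hA', neg_smul, pderiv_pderiv_comm]

variable [DecidableEq σ] in
theorem laplacian_linearVectorField_of_transpose_eq_neg {A : Matrix σ σ R} (hA : Aᵀ = -A)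
    (P : MvPolynomial σ R) :
    laplacian σ R (linearVectorField A P) = linearVectorField A (laplacian σ R P) := by
  rw [laplacian_linearVectorField, two_mul, add_eq_right, add_eq_zero_iff_eq_neg]
  exact sum_smul_pderiv_pderiv_of_transpose_eq_neg hA P

end LinearVectorField

end MvPolynomial

open Matrix

theorem lap4_eq_laplacian (P : MvPolynomial (Fin 4) ℝ) : lap4 P = laplacian (Fin 4) ℝ P :=
  (laplacian_apply P).symm

theorem Lop1_eq_linearVectorField (P : MvPolynomial (Fin 4) ℝ) :
    Lop1 P = linearVectorField !![0, 0, -1, 0; 0, 0, 0, -1; 1, 0, 0, 0; 0, 1, 0, 0] P := by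
  simp only [Lop1, Fin.isValue, linearVectorField_apply, of_apply, cons_val', cons_val_fin_one,
    Fin.sum_univ_four, cons_val_zero, cons_val_one, cons_val, zero_smul, neg_smul, one_smul,
    zero_add, add_zero]
  ring

theorem Lop2_eq_linearVectorField (P : MvPolynomial (Fin 4) ℝ) :
    Lop2 P = linearVectorField !![0, 0, 0, 1; 0, 0, -1, 0; 0, 1, 0, 0; -1, 0, 0, 0] P := by
  simp only [Lop2, Fin.isValue, linearVectorField_apply, of_apply, cons_val', cons_val_fin_one,
    Fin.sum_univ_four, cons_val_zero, cons_val_one, cons_val, zero_smul, neg_smul, one_smul,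
    zero_add, add_zero]
  ring

theorem Lop3_eq_linearVectorField (P : MvPolynomial (Fin 4) ℝ) :
    Lop3 P = linearVectorField !![0, -1, 0, 0; 1, 0, 0, 0; 0, 0, 0, 1; 0, 0, -1, 0] P := by
  simp only [Lop3, Fin.isValue, linearVectorField_apply, of_apply, cons_val', cons_val_fin_one,
    Fin.sum_univ_four, cons_val_zero, cons_val_one, cons_val, zero_smul, neg_smul, one_smul,
    zero_add, add_zero]
  ring

/-- If `P` is homogeneous of degree `p` and harmonic, then so are `L₁P`, `L₂P`, `L₃P`. -/
theorem stmt14 (p : ℕ) (P : MvPolynomial (Fin 4) ℝ)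
    (hhom : P.IsHomogeneous p) (hharm : lap4 P = 0) :
    ((Lop1 P).IsHomogeneous p ∧ lap4 (Lop1 P) = 0) ∧
    ((Lop2 P).IsHomogeneous p ∧ lap4 (Lop2 P) = 0) ∧
    ((Lop3 P).IsHomogeneous p ∧ lap4 (Lop3 P) = 0) := by
  have key (A : Matrix (Fin 4) (Fin 4) ℝ) (hA : Aᵀ = -A) :
      (linearVectorField A P).IsHomogeneous p ∧ lap4 (linearVectorField A P) = 0 := by
    refine ⟨hhom.linearVectorField A, ?_⟩
    rw [lap4_eq_laplacian, laplacian_linearVectorField_of_transpose_eq_neg hA,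
      ← lap4_eq_laplacian, hharm, map_zero]
  rw [Lop1_eq_linearVectorField, Lop2_eq_linearVectorField, Lop3_eq_linearVectorField]
  refine ⟨key _ ?_, key _ ?_, key _ ?_⟩ <;>
  · ext i j
    fin_cases i <;> fin_cases j <;> simp
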